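/- Let n ≥ 2 and let H be an n×n real symmetric matrix, let v₁, …, vₙ be an orthonormal basis of ℝⁿ consisting of eigenvectors of H with H vⱼ = λⱼ vⱼ and λ₁ ≤ λ₂ ≤ ⋯ ≤ λₙ. Suppose there is perfect state transfer from vertex 1 to vertex 2 at time t₀, i.e. |(exp(i t₀ H))₁₂| = 1. Then for every real h with |h|·(λₙ − λ₁) < π and every real number s, the fidelity at the perturbed time satisfies p(t₀ + h) ≥ 1 − h² · Σⱼ ((vⱼ)₁)² · (λⱼ − s)², where (vⱼ)₁ denotes the first coordinate of vⱼ. -/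

import Mathlib

/-!
Write `a j = (v j)₁`, `b j = (v j)₂` and `z j = exp (i t₀ λⱼ)`, so that the transfer amplitude
at time `t` is `∑ⱼ a j b j exp (i t λⱼ)`. Since `a` and `b` are unit vectors (columns of an
orthogonal matrix), perfect state transfer at `t₀` is the equality case of Cauchy–Schwarz:
`b j z j = w a j` with `|w| = 1`. Hence the amplitude at `t₀ + h` is `w ∑ⱼ (a j)² exp (i h λⱼ)`,
whose modulus is at least the real part of `∑ⱼ (a j)² exp (i h (λⱼ - s))`, i.e.
`∑ⱼ (a j)² cos (h (λⱼ - s)) ≥ 1 - q / 2` with `q = h² ∑ⱼ (a j)² (λⱼ - s)²`; squaring gives `1 - q`.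
-/

open Matrix

/-- The time evolution `exp(i t H)` of a real symmetric Hamiltonian `H`,
regarded as a complex matrix. -/
noncomputable def timeEvo {n : ℕ} (H : Matrix (Fin n) (Fin n) ℝ) (t : ℝ) :
    Matrix (Fin n) (Fin n) ℂ :=
  NormedSpace.exp (Complex.I • (t : ℂ) • H.map (fun x => (x : ℂ)))

namespace Matrix

variable {ι : Type*} [Fintype ι] [DecidableEq ι]

section CommRing

variable {R : Type*} [CommRing R]

theorem of_mul_transpose_of_orthonormal {v : ι → ι → R}
    (hON : ∀ j k, v j ⬝ᵥ v k = if j = k then (1 : R) else 0) : of v * (of v)ᵀ = 1 := by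
  ext j k
  rw [mul_apply', one_apply]
  exact hON j k

theorem transpose_mul_of_of_orthonormal {v : ι → ι → R}
    (hON : ∀ j k, v j ⬝ᵥ v k = if j = k then (1 : R) else 0) : (of v)ᵀ * of v = 1 :=
  mul_eq_one_comm.mp (of_mul_transpose_of_orthonormal hON)

theorem sum_mul_apply_of_orthonormal {v : ι → ι → R}
    (hON : ∀ j k, v j ⬝ᵥ v k = if j = k then (1 : R) else 0) (i k : ι) :
    ∑ j, v j i * v j k = if i = k then 1 else 0 := by
  simpa [mul_apply, one_apply] using congrFun (congrFun (transpose_mul_of_of_orthonormal hON) i) k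

theorem eq_transpose_mul_diagonal_mul_of_orthonormal {A : Matrix ι ι R} {μ : ι → R}
    {v : ι → ι → R} (hON : ∀ j k, v j ⬝ᵥ v k = if j = k then (1 : R) else 0)
    (heig : ∀ j, A *ᵥ v j = μ j • v j) : A = (of v)ᵀ * diagonal μ * of v := by
  have hAV : A * (of v)ᵀ = (of v)ᵀ * diagonal μ := by
    ext i j
    have := congrFun (heig j) i
    rw [mul_diagonal, mul_apply']
    simpa [mulVec, mul_comm] using this
  calc A = A * ((of v)ᵀ * of v) := by rw [transpose_mul_of_of_orthonormal hON, Matrix.mul_one]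
    _ = _ := by rw [← Matrix.mul_assoc, hAV]

end CommRing

theorem exp_eq_transpose_mul_diagonal_mul_of_orthonormal {𝔸 : Type*} [NormedCommRing 𝔸]
    [NormedAlgebra ℚ 𝔸] [CompleteSpace 𝔸] {A : Matrix ι ι 𝔸} {μ : ι → 𝔸} {v : ι → ι → 𝔸}
    (hON : ∀ j k, v j ⬝ᵥ v k = if j = k then (1 : 𝔸) else 0)
    (heig : ∀ j, A *ᵥ v j = μ j • v j) :
    NormedSpace.exp A = (of v)ᵀ * diagonal (fun j => NormedSpace.exp (μ j)) * of v := by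
  let U : (Matrix ι ι 𝔸)ˣ :=
    ⟨(of v)ᵀ, of v, transpose_mul_of_of_orthonormal hON, of_mul_transpose_of_orthonormal hON⟩
  rw [eq_transpose_mul_diagonal_mul_of_orthonormal hON heig]
  have := exp_units_conj U (diagonal μ)
  rwa [exp_diagonal, Pi.exp_def] at this

end Matrix

theorem timeEvo_apply {n : ℕ} {H : Matrix (Fin n) (Fin n) ℝ} {μ : Fin n → ℝ}
    {v : Fin n → Fin n → ℝ} (hON : ∀ j k, v j ⬝ᵥ v k = if j = k then (1 : ℝ) else 0)
    (heig : ∀ j, H *ᵥ v j = μ j • v j) (t : ℝ) (i k : Fin n) :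
    timeEvo H t i k = ∑ j, (v j i : ℂ) * v j k * Complex.exp (Complex.I * t * μ j) := by
  have hONℂ : ∀ j k, (fun m => (v j m : ℂ)) ⬝ᵥ (fun m => (v k m : ℂ))
      = if j = k then (1 : ℂ) else 0 := fun j k => by
    have := congrArg Complex.ofReal (hON j k)
    push_cast [dotProduct, apply_ite Complex.ofReal] at this
    exact this
  have heigℂ : ∀ j, (Complex.I • (t : ℂ) • H.map (fun x => (x : ℂ))) *ᵥ (fun m => (v j m : ℂ))
      = (Complex.I * t * μ j) • (fun m => (v j m : ℂ)) := fun j => by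
    ext i
    have := congrArg Complex.ofReal (congrFun (heig j) i)
    push_cast [mulVec, dotProduct, Pi.smul_apply, smul_eq_mul] at this
    simp only [mulVec, dotProduct, Matrix.smul_apply, map_apply, smul_eq_mul, Pi.smul_apply]
    calc _ = Complex.I * t * ∑ m, (H i m : ℂ) * v j m := by
          rw [Finset.mul_sum]; exact Finset.sum_congr rfl fun m _ => by ring
      _ = _ := by rw [this]; ring
  rw [timeEvo, Matrix.exp_eq_transpose_mul_diagonal_mul_of_orthonormal hONℂ heigℂ,
    Matrix.mul_apply]
  simp only [← Complex.exp_eq_exp_ℂ, mul_diagonal, transpose_apply, of_apply]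
  exact Finset.sum_congr rfl fun j _ => by ring

theorem mul_mul_eq_mul_sq_of_norm_sum_eq_one {ι : Type*} [Fintype ι] {a b : ι → ℝ} {z : ι → ℂ}
    (hz : ∀ j, ‖z j‖ = 1) (ha : ∑ j, a j ^ 2 = 1) (hb : ∑ j, b j ^ 2 = 1)
    (hw : ‖∑ j, (a j : ℂ) * b j * z j‖ = 1) (j : ι) :
    (a j : ℂ) * b j * z j = (∑ k, (a k : ℂ) * b k * z k) * (a j : ℂ) ^ 2 := by
  set w := ∑ k, (a k : ℂ) * b k * z k
  have hww : starRingEnd ℂ w * w = 1 := by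
    rw [mul_comm, Complex.mul_conj, Complex.normSq_eq_norm_sq, hw]; simp
  -- equality case of Cauchy–Schwarz: `∑ ‖c k - a k‖² = ‖b‖² + ‖a‖² - 2 ‖w‖² = 0`
  set c : ι → ℂ := fun k => starRingEnd ℂ w * z k * b k
  have hsq : ∀ k, Complex.normSq (c k - a k)
      = b k ^ 2 + a k ^ 2 - 2 * (starRingEnd ℂ w * ((a k : ℂ) * b k * z k)).re := fun k => by
    rw [Complex.normSq_sub]
    simp only [c, Complex.normSq_eq_norm_sq, norm_mul, Complex.norm_conj, hw, hz,
      Complex.conj_ofReal, Complex.norm_real, Real.norm_eq_abs, one_mul]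
    rw [sq_abs, sq_abs]
    ring_nf
  have hsum : ∑ k, Complex.normSq (c k - a k) = 0 := by
    simp_rw [hsq]
    rw [Finset.sum_sub_distrib, Finset.sum_add_distrib, ← Finset.mul_sum, ← Complex.re_sum,
      ← Finset.mul_sum, hww, ha, hb]
    norm_num
  have hc : c j = a j := sub_eq_zero.mp <| Complex.normSq_eq_zero.mp <|
    (Finset.sum_eq_zero_iff_of_nonneg fun k _ => Complex.normSq_nonneg _).mp hsum j
      (Finset.mem_univ j)
  calc (a j : ℂ) * b j * z j = a j * (w * c j) := by
        simp only [c]; linear_combination (a j : ℂ) * z j * b j * hww.symm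
    _ = w * (a j : ℂ) ^ 2 := by rw [hc]; ring

theorem one_sub_sum_mul_sq_le_norm_sum_mul_exp_sq {ι : Type*} [Fintype ι] {p θ : ι → ℝ}
    (hp : ∀ j, 0 ≤ p j) (hp₁ : ∑ j, p j = 1) (σ : ℝ) :
    1 - ∑ j, p j * (θ j - σ) ^ 2 ≤ ‖∑ j, (p j : ℂ) * Complex.exp (θ j * Complex.I)‖ ^ 2 := by
  set S := ∑ j, (p j : ℂ) * Complex.exp (θ j * Complex.I)
  set q := ∑ j, p j * (θ j - σ) ^ 2
  have hrot : Complex.exp (-σ * Complex.I) * S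
      = ∑ j, (p j : ℂ) * Complex.exp ((θ j - σ : ℝ) * Complex.I) := by
    rw [Finset.mul_sum]
    refine Finset.sum_congr rfl fun j _ => ?_
    rw [mul_left_comm, ← Complex.exp_add]
    push_cast; ring_nf
  have hre : 1 - q / 2 ≤ ‖S‖ := calc
    1 - q / 2 = ∑ j, p j * (1 - (θ j - σ) ^ 2 / 2) := by
      simp only [q, mul_sub, mul_one, Finset.sum_sub_distrib, hp₁, Finset.sum_div]
      congr 1; exact Finset.sum_congr rfl fun j _ => by ring
    _ ≤ ∑ j, p j * Real.cos (θ j - σ) :=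
      Finset.sum_le_sum fun j _ => mul_le_mul_of_nonneg_left Real.one_sub_sq_div_two_le_cos (hp j)
    _ = (Complex.exp (-σ * Complex.I) * S).re := by
      rw [hrot, Complex.re_sum]
      exact Finset.sum_congr rfl fun j _ => by rw [Complex.re_ofReal_mul, Complex.exp_ofReal_mul_I_re]
    _ ≤ ‖Complex.exp (-σ * Complex.I) * S‖ := Complex.re_le_norm _
    _ = ‖S‖ := by rw [norm_mul, ← Complex.ofReal_neg, Complex.norm_exp_ofReal_mul_I, one_mul]
  have hq : 0 ≤ q := Finset.sum_nonneg fun j _ => mul_nonneg (hp j) (sq_nonneg _)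
  rcases le_or_gt q 2 with hq2 | hq2
  · nlinarith
  · nlinarith [sq_nonneg ‖S‖]

/-- Theorem 2 (timing-error bound with eigenvector weights): if there is perfect state
transfer from vertex 1 to vertex 2 at time `t₀` and `|h| (λₙ - λ₁) < π` then, for any
real `s`, `p(t₀+h) ≥ 1 - h² ∑ⱼ (vⱼ)₁² (λⱼ - s)²`. -/
theorem stmt1 {n : ℕ} (hn : 2 ≤ n) (H : Matrix (Fin n) (Fin n) ℝ)
    (μ : Fin n → ℝ)
    (v : Fin n → (Fin n → ℝ))
    (hON : ∀ j k, v j ⬝ᵥ v k = if j = k then (1 : ℝ) else 0)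
    (heig : ∀ j, H.mulVec (v j) = μ j • v j)
    (t₀ : ℝ)
    (hPST : ‖timeEvo H t₀ ⟨0, by omega⟩ ⟨1, by omega⟩‖ = 1)
    (h : ℝ)
    (s : ℝ) :
    1 - h ^ 2 * ∑ j, (v j ⟨0, by omega⟩) ^ 2 * (μ j - s) ^ 2
      ≤ ‖timeEvo H (t₀ + h) ⟨0, by omega⟩ ⟨1, by omega⟩‖ ^ 2 := by
  set a : Fin n → ℝ := fun j => v j ⟨0, by omega⟩
  set b : Fin n → ℝ := fun j => v j ⟨1, by omega⟩
  have hcol : ∀ i, ∑ j, v j i ^ 2 = 1 := fun i => by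
    simpa [sq] using sum_mul_apply_of_orthonormal hON i i
  have hz : ∀ j, ‖Complex.exp (Complex.I * t₀ * μ j)‖ = 1 := fun j => by
    rw [Complex.norm_exp]; simp
  rw [timeEvo_apply hON heig] at hPST ⊢
  have hphase := mul_mul_eq_mul_sq_of_norm_sum_eq_one hz (hcol _) (hcol _) hPST
  set w := ∑ j, (a j : ℂ) * b j * Complex.exp (Complex.I * t₀ * μ j)
  have hsplit : ∑ j, (a j : ℂ) * b j * Complex.exp (Complex.I * ↑(t₀ + h) * μ j)
      = w * ∑ j, ((a j ^ 2 : ℝ) : ℂ) * Complex.exp ((h * μ j : ℝ) * Complex.I) := by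
    rw [Finset.mul_sum]
    refine Finset.sum_congr rfl fun j _ => ?_
    rw [Complex.ofReal_add, mul_add, add_mul, Complex.exp_add, ← mul_assoc, hphase j]
    push_cast; simp only [a]; ring_nf
  rw [hsplit, norm_mul, hPST, one_mul]
  convert one_sub_sum_mul_sq_le_norm_sum_mul_exp_sq (fun j => sq_nonneg (a j)) (hcol _) (h * s)
    using 2
  rw [Finset.mul_sum]
  exact Finset.sum_congr rfl fun j _ => by ring
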